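/- Let G be a finite simple connected graph and X ⊆ V(G) with κ_G(X) = 4 and κ_G(V(G)) = 3, and suppose that κ_{G/vy}(X) < 4 for every X-legal edge vy of G. Then: (i) every separator T of G with |T| = 3 is an anticlique of G; (ii) for every such T, every X-free T-fragment F, every t ∈ T, and every y ∈ F ∩ N_G(t), there exists an X-separator S of G of size 4 with t, y ∈ S, and for every such S and every S-X-fragment B one has |B ∩ T| = 1. -/

import Mathlib

open SimpleGraph

variable {V : Type*} {W : Type*}

/-- `S` is an `X`-separator of `G`: at least two components of `G - S`
contain a vertex of `X`. -/
def SepSet (G : SimpleGraph V) (X S : Set V) : Prop :=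
  ∃ (x y : V) (hx : x ∈ X ∧ x ∉ S) (hy : y ∈ X ∧ y ∉ S),
    ¬ (G.induce Sᶜ).Reachable ⟨x, hx.2⟩ ⟨y, hy.2⟩

/-- `κ_G(X)`: the largest `k ≤ |X| - 1` such that every `X`-separator of `G`
has at least `k` vertices. -/
noncomputable def graphKappa (G : SimpleGraph V) (X : Set V) : ℕ :=
  sSup {k : ℕ | k ≤ X.ncard - 1 ∧ ∀ S : Set V, SepSet G X S → k ≤ S.ncard}

/-- `G/vy`: the graph obtained from `G` by contracting the edge `vy` into `v`,
i.e. `y` is removed (it becomes an isolated vertex of the ambient type) and an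
edge `vz` is added for every `z` with `yz ∈ E(G)` and `vz ∉ E(G)`. -/
def contractEdge (G : SimpleGraph V) (v y : V) : SimpleGraph V where
  Adj a b := a ≠ y ∧ b ≠ y ∧ a ≠ b ∧
    (G.Adj a b ∨ (a = v ∧ G.Adj y b) ∨ (b = v ∧ G.Adj a y))
  symm := by
    constructor
    rintro a b ⟨ha, hb, hab, h⟩
    refine ⟨hb, ha, hab.symm, ?_⟩
    rcases h with h | ⟨rfl, h⟩ | ⟨rfl, h⟩
    · exact Or.inl h.symm
    · exact Or.inr (Or.inr ⟨rfl, h.symm⟩)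
    · exact Or.inr (Or.inl ⟨rfl, h.symm⟩)
  loopless := by constructor; rintro a ⟨_, _, h, _⟩; exact h rfl

/-- `F` is an `S`-fragment of `G`: a union of the vertex sets of at least one
but not all components of `G - S`. -/
def IsFragment (G : SimpleGraph V) (S F : Set V) : Prop :=
  F.Nonempty ∧ Disjoint F S ∧ (Sᶜ \ F).Nonempty ∧
    ∀ a ∈ F, ∀ b, G.Adj a b → b ∉ S → b ∈ F

/-- `B` is an `S`-`X`-fragment of `G`: an `S`-fragment such that both `B` and
its complementary fragment `Sᶜ \ B` contain a vertex of `X`. -/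
def IsXFragment (G : SimpleGraph V) (X S B : Set V) : Prop :=
  IsFragment G S B ∧ (B ∩ X).Nonempty ∧ ((Sᶜ \ B) ∩ X).Nonempty

/-! The contraction hypothesis turns every edge `ty` with `y` in an `X`-free fragment of a
3-separator `T` into a 4-element `X`-separator `S ∋ t, y`. Removing from `S` its vertices in
that fragment leaves at most three vertices, so no side of `S` can avoid `T`; as `S` also meets
`T` in `t`, the three parts `S ∩ T`, `B ∩ T`, `(Sᶜ \ B) ∩ T` of `T` are singletons. For (i),
take `t` to be the vertex of `T` other than two adjacent ones `a`, `b`: then `a`, `b ∉ S` lie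
on a common side of `S`, which meets `T` only once. -/

section Separators

variable {G : SimpleGraph V} {X S B C : Set V}

def IsClosedOutside (G : SimpleGraph V) (S C : Set V) : Prop :=
  ∀ a ∈ C, ∀ b, G.Adj a b → b ∉ S → b ∈ C

lemma IsClosedOutside.mem_of_reachable (hC : IsClosedOutside G S C) {u v : ↥Sᶜ}
    (h : (G.induce Sᶜ).Reachable u v) (hu : ↑u ∈ C) : ↑v ∈ C := by
  obtain ⟨w⟩ := h
  induction w with
  | nil => exact hu
  | @cons _ v _ hadj _ ih => exact ih (hC _ hu _ hadj v.2)

lemma sepSet_iff_exists_isClosedOutside :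
    SepSet G X S ↔
      ∃ C, IsClosedOutside G S C ∧ (X \ S ∩ C).Nonempty ∧ ((X \ S) \ C).Nonempty := by
  constructor
  · rintro ⟨x, x', ⟨hx, hxS⟩, ⟨hx', hx'S⟩, hxx'⟩
    refine ⟨{z | ∃ hz : z ∉ S, (G.induce Sᶜ).Reachable ⟨x, hxS⟩ ⟨z, hz⟩}, ?_,
      ⟨x, ⟨hx, hxS⟩, hxS, .rfl⟩, ⟨x', ⟨hx', hx'S⟩, fun ⟨_, h⟩ => hxx' h⟩⟩
    rintro a ⟨haS, ha⟩ b hab hbS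
    exact ⟨hbS, ha.trans (show (G.induce Sᶜ).Adj ⟨a, haS⟩ ⟨b, hbS⟩ from hab).reachable⟩
  · rintro ⟨C, hC, ⟨x, ⟨hx, hxS⟩, hxC⟩, ⟨x', ⟨hx', hx'S⟩, hx'C⟩⟩
    exact ⟨x, x', ⟨hx, hxS⟩, ⟨hx', hx'S⟩, fun h => hx'C (hC.mem_of_reachable h hxC)⟩

lemma IsXFragment.sepSet (hB : IsXFragment G X S B) : SepSet G X S := by
  obtain ⟨hBS, ⟨x, hxB, hx⟩, ⟨x', ⟨hx'S, hx'B⟩, hx'⟩⟩ := hB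
  exact sepSet_iff_exists_isClosedOutside.mpr ⟨B, hBS.2.2.2,
    ⟨x, ⟨hx, hBS.2.1.notMem_of_mem_left hxB⟩, hxB⟩, ⟨x', ⟨hx', hx'S⟩, hx'B⟩⟩

lemma SepSet.exists_isXFragment (h : SepSet G X S) : ∃ B, IsXFragment G X S B := by
  obtain ⟨C, hC, ⟨x, ⟨hx, hxS⟩, hxC⟩, ⟨x', ⟨hx', hx'S⟩, hx'C⟩⟩ :=
    sepSet_iff_exists_isClosedOutside.mp h
  refine ⟨C \ S, ⟨⟨x, hxC, hxS⟩, Set.disjoint_sdiff_left, ⟨x', hx'S, fun h => hx'C h.1⟩, ?_⟩,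
    ⟨x, ⟨hxC, hxS⟩, hx⟩, ⟨x', ⟨hx'S, fun h => hx'C h.1⟩, hx'⟩⟩
  exact fun a ha b hab hbS => ⟨hC a ha.1 b hab hbS, hbS⟩

lemma IsXFragment.compl (hB : IsXFragment G X S B) : IsXFragment G X S (Sᶜ \ B) := by
  obtain ⟨⟨⟨u, hu⟩, hBS, hcompl, hcl⟩, ⟨x, hxB, hx⟩, hx'⟩ := hB
  have hBS' : B ⊆ Sᶜ := hBS.subset_compl_right
  refine ⟨⟨hcompl, Set.disjoint_left.mpr fun _ h => h.1, ⟨u, hBS' hu, fun h => h.2 hu⟩, ?_⟩,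
    hx', x, ⟨hBS' hxB, fun h => h.2 hxB⟩, hx⟩
  exact fun a ha b hab hbS => ⟨hbS, fun hbB => ha.2 (hcl b hbB a hab.symm ha.1)⟩

end Separators

section Kappa

variable {G : SimpleGraph V} {X : Set V}

lemma graphKappa_spec (G : SimpleGraph V) (X : Set V) :
    graphKappa G X ≤ X.ncard - 1 ∧ ∀ S, SepSet G X S → graphKappa G X ≤ S.ncard := by
  unfold graphKappa
  exact Nat.sSup_mem (s := {k | k ≤ X.ncard - 1 ∧ ∀ S, SepSet G X S → k ≤ S.ncard})
    ⟨0, Nat.zero_le _, fun _ _ => Nat.zero_le _⟩ ⟨X.ncard - 1, fun _ hk => hk.1⟩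

lemma exists_sepSet_ncard_lt_of_graphKappa_lt {k : ℕ} (hk : k ≤ X.ncard - 1)
    (h : graphKappa G X < k) : ∃ S, SepSet G X S ∧ S.ncard < k := by
  by_contra! hS
  unfold graphKappa at h
  exact h.not_ge (le_csSup ⟨X.ncard - 1, fun _ (hk : _ ∧ _) => hk.1⟩ ⟨hk, hS⟩)

end Kappa

section Contraction

variable {G : SimpleGraph V} {X S : Set V} {t y : V}

lemma contractEdge_adj_of_adj {a b : V} (h : G.Adj a b) (ha : a ≠ y) (hb : b ≠ y) :
    (contractEdge G t y).Adj a b :=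
  ⟨ha, hb, h.ne, Or.inl h⟩

lemma contractEdge_adj_of_adj_left (hty : G.Adj t y) {b : V} (h : G.Adj y b) (hb : t ≠ b) :
    (contractEdge G t y).Adj t b :=
  ⟨hty.ne, h.ne.symm, hb, Or.inr (Or.inl ⟨rfl, h⟩)⟩

lemma contractEdge_adj_or_eq [DecidableEq V] (hty : G.Adj t y) {a b : V} (h : G.Adj a b) :
    (if a = y then t else a) = (if b = y then t else b) ∨
      (contractEdge G t y).Adj (if a = y then t else a) (if b = y then t else b) := by
  rcases eq_or_ne a y with ha | ha <;> rcases eq_or_ne b y with hb | hb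
  · exact absurd (ha.trans hb.symm) h.ne
  · rw [if_pos ha, if_neg hb]
    exact (eq_or_ne t b).imp id (contractEdge_adj_of_adj_left hty (ha ▸ h))
  · rw [if_neg ha, if_pos hb]
    exact (eq_or_ne a t).imp id fun hat =>
      (contractEdge_adj_of_adj_left hty (hb ▸ h.symm) hat.symm).symm
  · rw [if_neg ha, if_neg hb]
    exact Or.inr (contractEdge_adj_of_adj h ha hb)

lemma SepSet.insert_of_contractEdge (hyX : y ∉ X) (h : SepSet (contractEdge G t y) X S) :
    SepSet G X (insert y S) := by
  obtain ⟨C, hC, ⟨x, ⟨hx, hxS⟩, hxC⟩, ⟨x', ⟨hx', hx'S⟩, hx'C⟩⟩ :=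
    sepSet_iff_exists_isClosedOutside.mp h
  have hne : ∀ {z}, z ∈ X → z ≠ y := fun hz => ne_of_mem_of_not_mem hz hyX
  refine sepSet_iff_exists_isClosedOutside.mpr ⟨C \ {y}, ?_, ⟨x, ⟨hx, ?_⟩, hxC, hne hx⟩,
    ⟨x', ⟨hx', ?_⟩, fun h => hx'C h.1⟩⟩
  · rintro a ⟨haC, hay⟩ b hab hb
    rw [Set.mem_insert_iff, not_or] at hb
    exact ⟨hC a haC b (contractEdge_adj_of_adj hab hay hb.1) hb.2, hb.1⟩
  · exact fun h => (Set.mem_insert_iff.mp h).elim (hne hx) hxS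
  · exact fun h => (Set.mem_insert_iff.mp h).elim (hne hx') hx'S

lemma SepSet.of_contractEdge (hty : G.Adj t y) (hyX : y ∉ X) (htS : t ∉ S)
    (h : SepSet (contractEdge G t y) X S) : SepSet G X S := by
  classical
  obtain ⟨C, hC, ⟨x, ⟨hx, hxS⟩, hxC⟩, ⟨x', ⟨hx', hx'S⟩, hx'C⟩⟩ :=
    sepSet_iff_exists_isClosedOutside.mp h
  have hfix : ∀ {z}, z ∈ X → (if z = y then t else z) = z :=
    fun hz => if_neg (ne_of_mem_of_not_mem hz hyX)
  refine sepSet_iff_exists_isClosedOutside.mpr ⟨{z | (if z = y then t else z) ∈ C}, ?_,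
    ⟨x, ⟨hx, hxS⟩, by simpa [hfix hx]⟩, ⟨x', ⟨hx', hx'S⟩, by simpa [hfix hx']⟩⟩
  intro a ha b hab hbS
  have hbS' : (if b = y then t else b) ∉ S := by split_ifs <;> assumption
  rcases contractEdge_adj_or_eq hty hab with heq | hadj
  · exact (show _ ∈ C from heq ▸ ha)
  · exact hC _ ha _ hadj hbS'

lemma exists_sepSet_ncard_eq_of_contractEdge {k : ℕ}
    (hX : ∀ S, SepSet G X S → k ≤ S.ncard) (hty : G.Adj t y) (hyX : y ∉ X)
    (hcontr : ∃ S, SepSet (contractEdge G t y) X S ∧ S.ncard < k) :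
    ∃ S, SepSet G X S ∧ S.ncard = k ∧ t ∈ S ∧ y ∈ S := by
  obtain ⟨S, hS, hSk⟩ := hcontr
  by_cases htS : t ∈ S
  · have hins := hS.insert_of_contractEdge hyX
    refine ⟨insert y S, hins, ?_, Set.mem_insert_of_mem _ htS, Set.mem_insert _ _⟩
    have := Set.ncard_insert_le y S
    have := hX _ hins
    omega
  · exact absurd (hX _ (hS.of_contractEdge hty hyX htS)) hSk.not_ge

end Contraction

lemma eq_of_mem_of_ncard_eq_one {α : Type*} {s : Set α} (h : s.ncard = 1) {a b : α}
    (ha : a ∈ s) (hb : b ∈ s) : a = b := by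
  obtain ⟨z, rfl⟩ := Set.ncard_eq_one.mp h
  exact ha.trans hb.symm

section Fragments

variable {G : SimpleGraph V} {X S T F B : Set V} {t : V}

lemma exists_isFragment_disjoint_of_not_sepSet (hT : SepSet G Set.univ T)
    (hXT : ¬ SepSet G X T) : ∃ F, IsFragment G T F ∧ Disjoint F X := by
  obtain ⟨B, hB⟩ := hT.exists_isXFragment
  by_contra! h
  exact hXT (IsXFragment.sepSet ⟨hB.1, Set.not_disjoint_iff_nonempty_inter.mp (h B hB.1),
    Set.not_disjoint_iff_nonempty_inter.mp (h _ hB.compl.1)⟩)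

lemma IsFragment.exists_adj (hF : IsFragment G T F) (ht : t ∈ T)
    (hmin : ¬ SepSet G Set.univ (T \ {t})) : ∃ y ∈ F, G.Adj t y := by
  by_contra! h
  obtain ⟨u, hu⟩ := hF.1
  refine hmin (sepSet_iff_exists_isClosedOutside.mpr ⟨F, ?_,
    ⟨u, ⟨trivial, fun hu' => hF.2.1.notMem_of_mem_left hu hu'.1⟩, hu⟩,
    ⟨t, ⟨trivial, fun ht' => ht'.2 rfl⟩, hF.2.1.notMem_of_mem_right ht⟩⟩)
  intro a ha b hab hb
  by_cases hbT : b ∈ T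
  · have hbt : b = t := by_contra fun hbt => hb ⟨hbT, hbt⟩
    exact absurd (hbt ▸ hab.symm) (h a ha)
  · exact hF.2.2.2 a ha b hab hbT

/-- If the side `B` of `S` avoided `T`, then `B \ F` would be cut off by `S \ F`. -/
lemma IsXFragment.inter_nonempty (hF : IsFragment G T F) (hFX : Disjoint F X)
    (hmin : ¬ SepSet G X (S \ F)) (hB : IsXFragment G X S B) : (B ∩ T).Nonempty := by
  by_contra hBT
  obtain ⟨⟨-, hBS, -, hBcl⟩, ⟨x, hxB, hx⟩, ⟨x', ⟨hx'S, hx'B⟩, hx'⟩⟩ := hB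
  have hBT' : ∀ a ∈ B, a ∉ T := fun a ha haT => hBT ⟨a, ha, haT⟩
  refine hmin (sepSet_iff_exists_isClosedOutside.mpr ⟨B \ F, ?_,
    ⟨x, ⟨hx, fun h => hBS.notMem_of_mem_left hxB h.1⟩, hxB, hFX.notMem_of_mem_right hx⟩,
    ⟨x', ⟨hx', fun h => hx'S h.1⟩, fun h => hx'B h.1⟩⟩)
  rintro a ⟨haB, haF⟩ b hab hb
  have hbF : b ∉ F := fun hbF => haF (hF.2.2.2 b hbF a hab.symm (hBT' a haB))
  exact ⟨hBcl a haB b hab fun hbS => hb ⟨hbS, hbF⟩, hbF⟩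

lemma ncard_inter_add_ncard_inter_add_ncard_inter_le [Finite V] {A B C : Set V}
    (hAB : Disjoint A B) (hAC : Disjoint A C) (hBC : Disjoint B C) :
    (A ∩ T).ncard + (B ∩ T).ncard + (C ∩ T).ncard ≤ T.ncard := by
  rw [← Set.ncard_union_eq (hAB.mono Set.inter_subset_left Set.inter_subset_left),
    ← Set.ncard_union_eq <| Disjoint.union_left
      (hAC.mono Set.inter_subset_left Set.inter_subset_left)
      (hBC.mono Set.inter_subset_left Set.inter_subset_left)]
  exact Set.ncard_le_ncard (Set.union_subset (Set.union_subset Set.inter_subset_right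
    Set.inter_subset_right) Set.inter_subset_right)

lemma IsXFragment.ncard_inter_eq_one [Finite V] (hF : IsFragment G T F) (hFX : Disjoint F X)
    (hT3 : T.ncard = 3) (hST : (S ∩ T).Nonempty) (hmin : ¬ SepSet G X (S \ F))
    (hB : IsXFragment G X S B) : (B ∩ T).ncard = 1 ∧ (S ∩ T).ncard = 1 := by
  have h₁ := (Set.ncard_pos).mpr (hB.inter_nonempty hF hFX hmin)
  have h₂ := (Set.ncard_pos).mpr (hB.compl.inter_nonempty hF hFX hmin)
  have h₃ := (Set.ncard_pos).mpr hST
  have := ncard_inter_add_ncard_inter_add_ncard_inter_le (T := T) (B := Sᶜ \ B)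
    Set.disjoint_sdiff_right hB.1.2.1 (Set.disjoint_left.mpr fun _ h => h.1)
  omega

lemma SepSet.not_adj_of_ncard_inter_eq_one (hS : SepSet G X S)
    (hT : ∀ B, IsXFragment G X S B → (B ∩ T).ncard = 1) {a b : V}
    (ha : a ∈ T \ S) (hb : b ∈ T \ S) : ¬ G.Adj a b := by
  intro hab
  obtain ⟨D, hD, haD⟩ : ∃ D, IsXFragment G X S D ∧ a ∈ D := by
    obtain ⟨B, hB⟩ := hS.exists_isXFragment
    by_cases haB : a ∈ B
    exacts [⟨B, hB, haB⟩, ⟨_, hB.compl, ha.2, haB⟩]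
  have hbD : b ∈ D := hD.1.2.2.2 a haD b hab hb.2
  exact hab.ne (eq_of_mem_of_ncard_eq_one (hT D hD) ⟨haD, ha.1⟩ ⟨hbD, hb.1⟩)

end Fragments

section Claim

variable {G : SimpleGraph V} {X S T F B : Set V} {t y : V}

lemma IsXFragment.ncard_inter_eq_one_of_mem [Finite V]
    (hX4 : ∀ S, SepSet G X S → 4 ≤ S.ncard) (hF : IsFragment G T F) (hFX : Disjoint F X)
    (hT3 : T.ncard = 3) (ht : t ∈ T) (hy : y ∈ F) (hS4 : S.ncard = 4) (htS : t ∈ S)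
    (hyS : y ∈ S) (hB : IsXFragment G X S B) : (B ∩ T).ncard = 1 ∧ (S ∩ T).ncard = 1 := by
  refine hB.ncard_inter_eq_one hF hFX hT3 ⟨t, htS, ht⟩ fun hsep => ?_
  have hlt : (S \ F).ncard < S.ncard :=
    Set.ncard_lt_ncard <|
      (Set.ssubset_iff_of_subset Set.sdiff_subset).mpr ⟨y, hyS, fun h => h.2 hy⟩
  have := hX4 _ hsep
  omega

lemma isIndepSet_of_ncard_eq_three [Finite V] (hX4 : ∀ S, SepSet G X S → 4 ≤ S.ncard)
    (hV3 : ∀ S, SepSet G Set.univ S → 3 ≤ S.ncard)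
    (hsep : ∀ t y, G.Adj t y → y ∉ X → ∃ S, SepSet G X S ∧ S.ncard = 4 ∧ t ∈ S ∧ y ∈ S)
    (hT : SepSet G Set.univ T) (hT3 : T.ncard = 3) : G.IsIndepSet T := by
  intro a ha b hb hne hab
  obtain ⟨c, hc, hcab⟩ := Set.exists_mem_notMem_of_ncard_lt_ncard (s := {a, b}) (t := T)
    (by rw [Set.ncard_pair hne, hT3]; norm_num)
  obtain ⟨hca, hcb⟩ : c ≠ a ∧ c ≠ b := by simpa [not_or] using hcab
  obtain ⟨F, hF, hFX⟩ :=
    exists_isFragment_disjoint_of_not_sepSet hT fun h => by have := hX4 T h; omega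
  obtain ⟨y, hy, hcy⟩ := hF.exists_adj hc fun h => by
    have := hV3 _ h
    rw [Set.ncard_sdiff_singleton_of_mem hc] at this
    omega
  obtain ⟨S, hS, hS4, hcS, hyS⟩ := hsep c y hcy (hFX.notMem_of_mem_left hy)
  have hcount := fun B (hB : IsXFragment G X S B) =>
    hB.ncard_inter_eq_one_of_mem hX4 hF hFX hT3 hc hy hS4 hcS hyS
  obtain ⟨B, hB⟩ := hS.exists_isXFragment
  have hnotS : ∀ z ∈ T, z ≠ c → z ∉ S := fun z hz hzc hzS =>
    hzc (eq_of_mem_of_ncard_eq_one (hcount B hB).2 ⟨hzS, hz⟩ ⟨hcS, hc⟩)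
  exact hS.not_adj_of_ncard_inter_eq_one (fun B hB => (hcount B hB).1)
    ⟨ha, hnotS a ha hca.symm⟩ ⟨hb, hnotS b hb hcb.symm⟩ hab

end Claim

theorem separator_anticlique_claim_general {V : Type*} [Fintype V] (G : SimpleGraph V)
    (X : Set V)
    (hX : graphKappa G X = 4) (hV : graphKappa G Set.univ = 3)
    (hcontr : ∀ v y : V, G.Adj v y → y ∉ X →
      graphKappa (contractEdge G v y) X < 4)
    (T : Set V) (hT : SepSet G Set.univ T) (hT3 : T.ncard = 3) :
    (∀ a ∈ T, ∀ b ∈ T, ¬ G.Adj a b) ∧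
    (∀ F : Set V, IsFragment G T F → Disjoint F X →
      ∀ t ∈ T, ∀ y ∈ F, G.Adj t y →
        (∃ S : Set V, SepSet G X S ∧ S.ncard = 4 ∧ t ∈ S ∧ y ∈ S) ∧
        (∀ S : Set V, SepSet G X S → S.ncard = 4 → t ∈ S → y ∈ S →
          ∀ B : Set V, IsXFragment G X S B → (B ∩ T).ncard = 1)) := by
  obtain ⟨hXcard, hX4⟩ := hX ▸ graphKappa_spec G X
  have hV3 := hV ▸ (graphKappa_spec G Set.univ).2
  have hsep : ∀ t y, G.Adj t y → y ∉ X → ∃ S, SepSet G X S ∧ S.ncard = 4 ∧ t ∈ S ∧ y ∈ S :=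
    fun t y hty hyX => exists_sepSet_ncard_eq_of_contractEdge hX4 hty hyX
      (exists_sepSet_ncard_lt_of_graphKappa_lt hXcard (hcontr t y hty hyX))
  refine ⟨fun a ha b hb hab =>
      isIndepSet_of_ncard_eq_three hX4 hV3 hsep hT hT3 ha hb hab.ne hab,
    fun F hF hFX t ht y hy hty => ⟨hsep t y hty (hFX.notMem_of_mem_left hy), ?_⟩⟩
  exact fun S _ hS4 htS hyS B hB =>
    (hB.ncard_inter_eq_one_of_mem hX4 hF hFX hT3 ht hy hS4 htS hyS).1

/-- Claim: let `G` be a finite simple connected graph and `X ⊆ V(G)` with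
`κ_G(X) = 4` and `κ_G(V(G)) = 3`, such that `κ_{G/vy}(X) < 4` for every
`X`-legal edge `vy` of `G`.  Then for every separator `T` of `G` with
`|T| = 3`:
(i) `T` is an anticlique of `G`, and
(ii) for every `X`-free `T`-fragment `F`, every `t ∈ T` and every
`y ∈ F ∩ N_G(t)`, there is an `X`-separator `S` of size `4` with `t, y ∈ S`,
and for every such `S` and every `S`-`X`-fragment `B` one has `|B ∩ T| = 1`. -/
theorem separator_anticlique_claim {V : Type*} [Fintype V] (G : SimpleGraph V)
    (hconn : G.Connected) (X : Set V)
    (hX : graphKappa G X = 4) (hV : graphKappa G Set.univ = 3)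
    (hcontr : ∀ v y : V, G.Adj v y → y ∉ X →
      graphKappa (contractEdge G v y) X < 4)
    (T : Set V) (hT : SepSet G Set.univ T) (hT3 : T.ncard = 3) :
    (∀ a ∈ T, ∀ b ∈ T, ¬ G.Adj a b) ∧
    (∀ F : Set V, IsFragment G T F → Disjoint F X →
      ∀ t ∈ T, ∀ y ∈ F, G.Adj t y →
        (∃ S : Set V, SepSet G X S ∧ S.ncard = 4 ∧ t ∈ S ∧ y ∈ S) ∧
        (∀ S : Set V, SepSet G X S → S.ncard = 4 → t ∈ S → y ∈ S →
          ∀ B : Set V, IsXFragment G X S B → (B ∩ T).ncard = 1)) :=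
  separator_anticlique_claim_general G X hX hV hcontr T hT hT3
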